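/- arXiv:math/0610376 — 7 statements merged into one kernel-verified Lean document; each statement's English description precedes it below -/
import Mathlib

section
/- For the bilinear form on the ring of symmetric functions defined by ⟨p_λ, p_μ⟩_s = δ_{λμ} s^{ℓ(λ)} z_λ, the Gram matrix X_s = (⟨m_λ, h_μ⟩_s) satisfies X_{st} = X_s X_t for all nonnegative integers s, t. -/
open MvPolynomial Finset

noncomputable section

/-- The abstract ring of symmetric functions over `ℚ`, presented as the polynomial
ring in the power sums: the variable `n` stands for the power sum `p_n` (for `n ≥ 1`). -/
abbrev SymFn : Type := MvPolynomial ℕ ℚ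

/-- The power sum symmetric function `p_λ` attached to a partition `λ`. -/
def pP {k : ℕ} (lam : k.Partition) : SymFn :=
  (lam.parts.map fun i => (X i : SymFn)).prod

/-- `z` of an exponent vector `d` (where `d i` is the multiplicity of the part `i`). -/
def zOf (d : ℕ →₀ ℕ) : ℚ := d.prod fun i m => (i : ℚ) ^ m * (Nat.factorial m : ℚ)

/-- The number of parts recorded by an exponent vector. -/
def ellOf (d : ℕ →₀ ℕ) : ℕ := d.sum fun _ m => m

/-- The `s`-form on the ring of symmetric functions, determined by
`⟨p_λ, p_μ⟩_s = δ_{λμ} s^{ℓ(λ)} z_λ`. -/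
def sform (s : ℚ) (f g : SymFn) : ℚ :=
  ∑ d ∈ f.support ∪ g.support, coeff d f * coeff d g * s ^ ellOf d * zOf d

/-- `z_λ` for a partition `λ`. -/
def zP {k : ℕ} (lam : k.Partition) : ℚ :=
  ∏ i ∈ Finset.range (k + 1),
    (i : ℚ) ^ (lam.parts.count i) * (Nat.factorial (lam.parts.count i) : ℚ)

/-- The complete homogeneous symmetric function `h_n`, via its power sum expansion
`h_n = ∑_{λ ⊢ n} z_λ⁻¹ p_λ`. -/
def hP (n : ℕ) : SymFn := ∑ lam : n.Partition, (zP lam)⁻¹ • pP lam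

/-- `h_μ = h_{μ₁} h_{μ₂} ⋯` for a partition `μ`. -/
def hProd {k : ℕ} (mu : k.Partition) : SymFn := (mu.parts.map hP).prod

/-- The degree-`k` homogeneous component of the ring of symmetric functions:
the span of the `p_λ` for `λ ⊢ k`. -/
def degComp (k : ℕ) : Submodule ℚ SymFn :=
  Submodule.span ℚ (Set.range (pP (k := k)))

-- aux
def dvec {d : ℕ} (lam : d.Partition) : ℕ →₀ ℕ := lam.parts.toFinsupp

lemma dvec_inj {d : ℕ} : Function.Injective (dvec (d := d)) := by
  intro a b h
  exact Nat.Partition.ext (Multiset.toFinsupp.injective h)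

lemma prod_X_eq (M : Multiset ℕ) :
    (M.map fun i => (X i : SymFn)).prod = monomial M.toFinsupp 1 := by
  induction M using Multiset.induction with
  | empty => simp [Multiset.toFinsupp_zero, monomial_zero']
  | cons a M ih =>
      rw [Multiset.map_cons, Multiset.prod_cons, ih, ← Multiset.singleton_add,
        Multiset.toFinsupp_add, Multiset.toFinsupp_singleton, X, monomial_mul, one_mul]

lemma pP_eq {d : ℕ} (lam : d.Partition) : pP lam = monomial (dvec lam) 1 :=
  prod_X_eq lam.parts

lemma support_subset_of_mem {d : ℕ} {f : SymFn} (hf : f ∈ degComp d) :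
    f.support ⊆ Finset.image (dvec (d := d)) Finset.univ := by
  induction hf using Submodule.span_induction with
  | mem x hx =>
      obtain ⟨ν, rfl⟩ := hx
      rw [pP_eq]
      refine MvPolynomial.support_monomial_subset.trans ?_
      intro x hx
      simp only [Finset.mem_singleton] at hx
      subst hx
      exact Finset.mem_image.2 ⟨ν, Finset.mem_univ _, rfl⟩
  | zero => simp
  | add x y _ _ hx hy =>
      exact MvPolynomial.support_add.trans (Finset.union_subset hx hy)
  | smul c x _ hx => exact MvPolynomial.support_smul.trans hx

lemma sform_eq {d : ℕ} (s : ℚ) (f g : SymFn)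
    (hf : f.support ⊆ Finset.image (dvec (d := d)) Finset.univ) :
    sform s f g = ∑ ν : d.Partition,
      coeff (dvec ν) f * coeff (dvec ν) g * s ^ ellOf (dvec ν) * zOf (dvec ν) := by
  unfold sform
  have h1 : ∑ e ∈ f.support ∪ g.support, coeff e f * coeff e g * s ^ ellOf e * zOf e
      = ∑ e ∈ f.support, coeff e f * coeff e g * s ^ ellOf e * zOf e := by
    refine (Finset.sum_subset Finset.subset_union_left ?_).symm
    intro x _ hx
    rw [MvPolynomial.notMem_support_iff.mp hx]
    ring
  have h2 : ∑ e ∈ f.support, coeff e f * coeff e g * s ^ ellOf e * zOf e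
      = ∑ e ∈ Finset.image (dvec (d := d)) Finset.univ,
          coeff e f * coeff e g * s ^ ellOf e * zOf e := by
    refine Finset.sum_subset hf ?_
    intro x _ hx
    rw [MvPolynomial.notMem_support_iff.mp hx]
    ring
  rw [h1, h2, Finset.sum_image (fun a _ b _ h => dvec_inj h)]


set_option maxHeartbeats 1000000 in
/-- For the bilinear form on the ring of symmetric functions defined by
`⟨p_λ, p_μ⟩_s = δ_{λμ} s^{ℓ(λ)} z_λ`, the Gram matrix `X_s = (⟨m_λ, h_μ⟩_s)` on the degree-`d`
component (indexed by partitions of `d`) satisfies `X_{st} = X_s X_t` for all nonnegative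
integers `s, t`.  Here the monomial symmetric functions `m_λ` are characterized as the
homogeneous degree-`d` elements dual to the `h_μ` under the Hall pairing `⟨·,·⟩_1`. -/
theorem gram_matrix_mul (d : ℕ) (m : d.Partition → SymFn)
    (hm_deg : ∀ a, m a ∈ degComp d)
    (hm_dual : ∀ a b : d.Partition, sform 1 (m a) (hProd b) = if a = b then 1 else 0)
    (s t : ℕ) :
    Matrix.of (fun a b : d.Partition => sform ((s * t : ℕ) : ℚ) (m a) (hProd b)) =
      Matrix.of (fun a b : d.Partition => sform (s : ℚ) (m a) (hProd b)) *
        Matrix.of (fun a b : d.Partition => sform (t : ℚ) (m a) (hProd b)) := by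
  classical
  have hsupp : ∀ a, (m a).support ⊆ Finset.image dvec Finset.univ :=
    fun a => support_subset_of_mem (hm_deg a)
  set A : Matrix d.Partition d.Partition ℚ :=
    Matrix.of fun a ν => coeff (dvec ν) (m a) with hA
  set C : Matrix d.Partition d.Partition ℚ :=
    Matrix.of fun ν b => zOf (dvec ν) * coeff (dvec ν) (hProd b) with hC
  set e : d.Partition → ℕ := fun ν => ellOf (dvec ν) with he
  have hX : ∀ (u : ℚ), Matrix.of (fun a b : d.Partition => sform u (m a) (hProd b))
      = A * Matrix.diagonal (fun ν => u ^ e ν) * C := by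
    intro u
    ext a b
    rw [Matrix.of_apply, sform_eq u _ _ (hsupp a), Matrix.mul_apply]
    refine Finset.sum_congr rfl fun ν _ => ?_
    rw [Matrix.mul_diagonal]
    simp only [hA, hC, Matrix.of_apply]
    ring
  have h1 : A * C = 1 := by
    ext a b
    have hd := hm_dual a b
    rw [sform_eq 1 _ _ (hsupp a)] at hd
    rw [Matrix.mul_apply, Matrix.one_apply, ← hd]
    refine Finset.sum_congr rfl fun ν _ => ?_
    simp only [hA, hC, Matrix.of_apply, one_pow]
    ring
  have h2 : C * A = 1 := mul_eq_one_comm.mp h1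
  rw [hX, hX, hX]
  symm
  calc A * Matrix.diagonal (fun ν => (s:ℚ) ^ e ν) * C *
        (A * Matrix.diagonal (fun ν => (t:ℚ) ^ e ν) * C)
      = A * Matrix.diagonal (fun ν => (s:ℚ) ^ e ν) * (C * A) *
        (Matrix.diagonal (fun ν => (t:ℚ) ^ e ν) * C) := by
        simp only [Matrix.mul_assoc]
    _ = A * (Matrix.diagonal (fun ν => (s:ℚ) ^ e ν) *
        Matrix.diagonal (fun ν => (t:ℚ) ^ e ν)) * C := by
        rw [h2, Matrix.mul_one]; simp only [Matrix.mul_assoc]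
    _ = A * Matrix.diagonal (fun ν => ((s * t : ℕ) : ℚ) ^ e ν) * C := by
        rw [Matrix.diagonal_mul_diagonal,
          show (fun i => (s:ℚ) ^ e i * (t:ℚ) ^ e i) = fun ν => ((s * t : ℕ) : ℚ) ^ e ν
            from funext fun ν => by push_cast; rw [mul_pow]]
end
end

section
/- The determinant of the Gram matrix X_s = (⟨m_λ, h_μ⟩_s)_{λ,μ⊢d} equals s raised to the power Σ_{λ⊢d} ℓ(λ). -/
open MvPolynomial Finset

noncomputable section

-- exponent vector of a partition
def eF {k : ℕ} (l : k.Partition) : ℕ →₀ ℕ := l.parts.toFinsupp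

lemma eF_injective {k : ℕ} : Function.Injective (eF (k := k)) := by
  intro a b h
  have := Multiset.toFinsupp.injective h
  exact Nat.Partition.ext this

lemma prod_X_multiset (t : Multiset ℕ) :
    (t.map fun i => (X i : SymFn)).prod = monomial t.toFinsupp 1 := by
  induction t using Multiset.induction_on with
  | empty => simp [Multiset.toFinsupp_zero]
  | cons a u ih =>
      rw [Multiset.map_cons, Multiset.prod_cons, ih, X,
        monomial_mul, ← Multiset.toFinsupp_singleton a, ← Multiset.toFinsupp_add]
      simp [Multiset.singleton_add]

lemma pP_eq_s2 {k : ℕ} (l : k.Partition) : pP l = monomial (eF l) 1 :=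
  prod_X_multiset l.parts

lemma ellOf_eF {k : ℕ} (l : k.Partition) : ellOf (eF l) = Multiset.card l.parts := by
  rw [ellOf, eF, ← Multiset.toFinsupp_sum_eq l.parts]
  rfl

lemma zOf_eF {k : ℕ} (l : k.Partition) : zOf (eF l) = zP l := by
  have hsub : (eF l).support ⊆ Finset.range (k + 1) := by
    intro i hi
    rw [Finsupp.mem_support_iff] at hi
    have hmem : i ∈ l.parts := by
      simpa [eF, Multiset.count_ne_zero] using hi
    have : i ≤ l.parts.sum := Multiset.le_sum_of_mem hmem
    rw [l.parts_sum] at this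
    simpa [Finset.mem_range] using Nat.lt_succ_of_le this
  rw [zOf, Finsupp.prod_of_support_subset _ hsub _ (by intro i _; simp)]
  unfold zP
  refine Finset.prod_congr rfl fun i _ => ?_
  simp [eF]

lemma support_subset_of_mem_degComp {d : ℕ} {f : SymFn} (h : f ∈ degComp d) :
    f.support ⊆ Finset.univ.image (eF (k := d)) := by
  induction h using Submodule.span_induction with
  | mem x hx =>
      obtain ⟨l, rfl⟩ := hx
      rw [pP_eq_s2]
      intro y hy
      rw [support_monomial] at hy
      simp only [if_neg (one_ne_zero), Finset.mem_singleton] at hy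
      subst hy
      exact Finset.mem_image_of_mem _ (Finset.mem_univ l)
  | zero => simp
  | add x y _ _ hx hy => exact (MvPolynomial.support_add).trans (Finset.union_subset hx hy)
  | smul c x _ hx => exact (MvPolynomial.support_smul).trans hx

lemma sform_eq_sum (s : ℚ) {d : ℕ} {f g : SymFn}
    (hf : f.support ⊆ Finset.univ.image (eF (k := d)))
    (hg : g.support ⊆ Finset.univ.image (eF (k := d))) :
    sform s f g = ∑ l : d.Partition,
      coeff (eF l) f * coeff (eF l) g * s ^ (Multiset.card l.parts) * zP l := by
  rw [sform, Finset.sum_subset (Finset.union_subset hf hg)]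
  · rw [Finset.sum_image (fun a _ b _ h => eF_injective h)]
    exact Finset.sum_congr rfl fun l _ => by rw [ellOf_eF, zOf_eF]
  · intro x _ hx
    rw [Finset.mem_union, not_or] at hx
    rw [notMem_support_iff.mp hx.1]
    ring

def punion {a b : ℕ} (l : a.Partition) (m : b.Partition) : (a + b).Partition :=
  ⟨l.parts + m.parts,
   fun {i} hi => by
     rcases Multiset.mem_add.mp hi with h | h
     exacts [l.parts_pos h, m.parts_pos h],
   by rw [Multiset.sum_add, l.parts_sum, m.parts_sum]⟩

lemma pP_punion {a b : ℕ} (l : a.Partition) (m : b.Partition) :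
    pP (punion l m) = pP l * pP m := by
  rw [pP, pP, pP, punion, Multiset.map_add, Multiset.prod_add]

lemma mul_mem_degComp {a b : ℕ} {f g : SymFn}
    (hf : f ∈ degComp a) (hg : g ∈ degComp b) : f * g ∈ degComp (a + b) := by
  induction hf using Submodule.span_induction with
  | mem x hx =>
      obtain ⟨l, rfl⟩ := hx
      induction hg using Submodule.span_induction with
      | mem y hy =>
          obtain ⟨p, rfl⟩ := hy
          rw [← pP_punion]
          exact Submodule.subset_span ⟨punion l p, rfl⟩
      | zero => simpa using (degComp (a + b)).zero_mem
      | add x y _ _ hx hy => rw [mul_add]; exact (degComp (a+b)).add_mem hx hy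
      | smul c x _ hx => rw [mul_smul_comm]; exact (degComp (a+b)).smul_mem c hx
  | zero => simpa using (degComp (a + b)).zero_mem
  | add x y _ _ hx hy => rw [add_mul]; exact (degComp (a+b)).add_mem hx hy
  | smul c x _ hx => rw [smul_mul_assoc]; exact (degComp (a+b)).smul_mem c hx

lemma hP_mem (n : ℕ) : hP n ∈ degComp n := by
  refine Submodule.sum_mem _ fun l _ => Submodule.smul_mem _ _ ?_
  exact Submodule.subset_span ⟨l, rfl⟩

lemma prod_hP_mem (t : Multiset ℕ) : (t.map hP).prod ∈ degComp t.sum := by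
  induction t using Multiset.induction_on with
  | empty =>
      simp only [Multiset.map_zero, Multiset.prod_zero, Multiset.sum_zero]
      have : (1 : SymFn) = pP (⟨0, by simp, by simp⟩ : Nat.Partition 0) := by
        simp [pP]
      rw [this]
      exact Submodule.subset_span ⟨_, rfl⟩
  | cons a u ih =>
      rw [Multiset.map_cons, Multiset.prod_cons, Multiset.sum_cons]
      exact mul_mem_degComp (hP_mem a) ih

lemma hProd_mem {d : ℕ} (mu : d.Partition) : hProd mu ∈ degComp d := by
  have := prod_hP_mem mu.parts
  rwa [mu.parts_sum] at this

lemma gram_factor (d : ℕ) (m : d.Partition → SymFn)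
    (hm_deg : ∀ a, m a ∈ degComp d) (s : ℚ) :
    Matrix.of (fun a b : d.Partition => sform s (m a) (hProd b)) =
      (Matrix.of fun (a : d.Partition) l => coeff (eF l) (m a)) *
        Matrix.diagonal (fun l : d.Partition => s ^ (Multiset.card l.parts) * zP l) *
        (Matrix.of fun (l : d.Partition) b => coeff (eF l) (hProd b)) := by
  ext a b
  rw [Matrix.mul_apply, Matrix.of_apply]
  rw [sform_eq_sum s (support_subset_of_mem_degComp (hm_deg a))
    (support_subset_of_mem_degComp (hProd_mem b))]
  refine Finset.sum_congr rfl fun l _ => ?_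
  rw [Matrix.mul_diagonal]
  simp only [Matrix.of_apply]
  ring


/-- The determinant of the Gram matrix `X_s = (⟨m_λ, h_μ⟩_s)_{λ,μ ⊢ d}`
equals `s` raised to the power `∑_{λ ⊢ d} ℓ(λ)`. -/
theorem gram_matrix_det (d : ℕ) (m : d.Partition → SymFn)
    (hm_deg : ∀ a, m a ∈ degComp d)
    (hm_dual : ∀ a b : d.Partition, sform 1 (m a) (hProd b) = if a = b then 1 else 0)
    (s : ℕ) :
    (Matrix.of (fun a b : d.Partition => sform (s : ℚ) (m a) (hProd b))).det =
      (s : ℚ) ^ (∑ a : d.Partition, Multiset.card a.parts) := by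
  set M := (Matrix.of fun (a : d.Partition) l => coeff (eF l) (m a)) with hM
  set H := (Matrix.of fun (l : d.Partition) b => coeff (eF l) (hProd b)) with hH
  have h1 : Matrix.of (fun a b : d.Partition => sform (1 : ℚ) (m a) (hProd b)) =
      (1 : Matrix (d.Partition) (d.Partition) ℚ) := by
    ext a b
    rw [Matrix.of_apply, hm_dual a b, Matrix.one_apply]
  have key : M.det * (∏ l : d.Partition, zP l) * H.det = 1 := by
    have := congrArg Matrix.det ((gram_factor d m hm_deg 1).symm.trans h1)
    rw [Matrix.det_one, Matrix.det_mul, Matrix.det_mul, Matrix.det_diagonal] at this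
    simp only [one_pow, one_mul] at this
    rw [← this]
  rw [gram_factor d m hm_deg (s : ℚ), Matrix.det_mul, Matrix.det_mul,
    Matrix.det_diagonal, Finset.prod_mul_distrib, Finset.prod_pow_eq_pow_sum]
  calc M.det * ((s:ℚ) ^ (∑ a : d.Partition, Multiset.card a.parts) *
        ∏ l : d.Partition, zP l) * H.det
      = (M.det * (∏ l : d.Partition, zP l) * H.det) *
        (s:ℚ) ^ (∑ a : d.Partition, Multiset.card a.parts) := by ring
    _ = _ := by rw [key]; try ring
end
end

section
/- Let p be prime and λ a partition of n with λ ≠ ((n/p)^p) (i.e., λ is not the partition with p equal parts n/p). Then p divides C(p, ℓ(λ)) · multinomial(ℓ(λ); m_1(λ), m_2(λ), …). -/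
/-- Let `p` be prime and `λ` a partition of `n > 0` with
`λ ≠ ((n/p)^p)` (i.e. `λ` is not the partition with `p` equal parts `n/p`).
Then `p` divides `C(p, ℓ(λ)) · multinomial(ℓ(λ); m_1(λ), m_2(λ), …)`. -/
theorem prime_dvd_choose_mul_multinomial (p n : ℕ) (hp : p.Prime) (hn : 0 < n)
    (lam : n.Partition) (hlam : lam.parts ≠ Multiset.replicate p (n / p)) :
    p ∣ Nat.choose p (Multiset.card lam.parts) *
        Nat.multinomial (Finset.range (n + 1)) (fun i => lam.parts.count i) := by
  have hsum : ∑ i ∈ Finset.range (n + 1), lam.parts.count i = Multiset.card lam.parts := by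
    rw [← Multiset.toFinset_sum_count_eq]
    refine (Finset.sum_subset ?_ ?_).symm
    · intro x hx
      rw [Multiset.mem_toFinset] at hx
      have hle : x ≤ n := by
        rw [← lam.parts_sum]
        exact Multiset.single_le_sum (fun y _ => Nat.zero_le y) _ hx
      simp only [Finset.mem_range]; omega
    · intro x _ hx
      rw [Multiset.count_eq_zero]
      simpa using hx
  have hpos : lam.parts ≠ 0 := by
    intro h
    have := lam.parts_sum
    rw [h] at this
    simp at this
    omega
  rcases lt_trichotomy (Multiset.card lam.parts) p with hlt | heq | hgt
  · exact Dvd.dvd.mul_right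
      (hp.dvd_choose_self (by simpa [Multiset.card_eq_zero] using hpos) hlt) _
  · have hcount : ∀ i ∈ Finset.range (n + 1), lam.parts.count i < p := by
      intro i hi
      have hle : lam.parts.count i ≤ p := heq ▸ Multiset.count_le_card i lam.parts
      rcases lt_or_eq_of_le hle with h | h
      · exact h
      exfalso
      have hall : ∀ x ∈ lam.parts, i = x :=
        Multiset.count_eq_card.mp (by rw [h, heq])
      have hrep : lam.parts = Multiset.replicate p i := by
        rw [← heq]
        exact Multiset.eq_replicate_card.mpr fun b hb => (hall b hb).symm
      have hsumn : p * i = n := by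
        have := lam.parts_sum
        rw [hrep] at this
        simpa [Multiset.sum_replicate, smul_eq_mul] using this
      have hi' : i = n / p := by
        rw [← hsumn, Nat.mul_div_cancel_left _ hp.pos]
      exact hlam (by rw [hrep, hi'])
    have hdvd : p ∣ Nat.multinomial (Finset.range (n + 1)) (fun i => lam.parts.count i) := by
      have hspec := Nat.multinomial_spec (Finset.range (n + 1)) (fun i => lam.parts.count i)
      have hpf : p ∣ (∑ i ∈ Finset.range (n + 1), lam.parts.count i).factorial := by
        rw [hsum, heq]
        exact Nat.dvd_factorial hp.pos le_rfl
      rw [← hspec] at hpf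
      rcases (hp.prime.dvd_mul).mp hpf with h | h
      · exfalso
        obtain ⟨a, ha, hpa⟩ := (hp.prime.dvd_finset_prod_iff _).mp h
        exact absurd (hp.dvd_factorial.mp hpa) (not_le.mpr (hcount a ha))
      · exact h
    exact hdvd.mul_left _
  · rw [Nat.choose_eq_zero_of_lt hgt, zero_mul]
    exact dvd_zero p
end

section
/- For a prime p, let h_n^{(1)} denote the coefficient of t^n in ∏_i(1-x_i t)^{-p}, so h_n^{(1)} = Σ_{λ⊢n} C(p,ℓ(λ)) multinomial(ℓ(λ); m_1(λ),…) h_λ. Then for any partition λ, h_{pλ}^{(1)} ≡ (h_λ)^p modulo pΛ, where h_{pλ}^{(1)} = ∏_i h_{pλ_i}^{(1)}. -/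
/-!
Modulo `p` the Frobenius endomorphism gives `H(t)^p = ∑ h_n^p t^{pn}`, so the coefficient
`h_{pi}^{(1)}` of `t^{pi}` reduces to `h_i^p`; multiplying over the parts of `λ` gives `(h_λ)^p`.
-/

open MvPolynomial

noncomputable section

/-- The ring of symmetric functions over `ℤ`, presented as the polynomial ring in the
complete homogeneous symmetric functions: variable `n` stands for `h_n` (for `n ≥ 1`). -/
abbrev LambdaZ : Type := MvPolynomial ℕ ℤ

/-- The generating function `H(t) = 1 + ∑_{n ≥ 1} h_n t^n = ∏_i (1 - x_i t)^{-1}`. -/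
def HSeries : PowerSeries LambdaZ :=
  PowerSeries.mk fun n => if n = 0 then 1 else X n

/-- `h_n^{(1)}`: the coefficient of `t^n` in `H(t)^p = ∏_i (1 - x_i t)^{-p}`. -/
def hOne (p n : ℕ) : LambdaZ := PowerSeries.coeff (R := LambdaZ) n (HSeries ^ p)

namespace PowerSeries

variable {R : Type*} [CommRing R] (p : ℕ) [ExpChar R p]

theorem map_frobenius_expand (f : PowerSeries R) :
    (expand p (expChar_ne_zero R p) f).map (frobenius R p) = f ^ p :=
  MvPowerSeries.map_frobenius_expand p _

theorem coeff_pow_expChar_mul (f : PowerSeries R) (n : ℕ) :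
    coeff (p * n) (f ^ p) = coeff n f ^ p := by
  rw [← map_frobenius_expand, coeff_map, coeff_expand_mul, frobenius_def]

end PowerSeries

theorem map_hOne_mul_eq_X_pow (p : ℕ) [Fact p.Prime] {i : ℕ} (hi : i ≠ 0) :
    MvPolynomial.map (Int.castRingHom (ZMod p)) (hOne p (p * i)) = X i ^ p := by
  rw [hOne, ← PowerSeries.coeff_map, map_pow, PowerSeries.coeff_pow_expChar_mul,
    PowerSeries.coeff_map, HSeries, PowerSeries.coeff_mk, if_neg hi, map_X]

/-- For any partition `λ`, `h_{pλ}^{(1)} ≡ (h_λ)^p` modulo `pΛ`,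
where `h_{pλ}^{(1)} = ∏_i h_{pλ_i}^{(1)}` and `h_λ = ∏_i h_{λ_i}`. -/
theorem hOne_smul_partition_mod_p (p : ℕ) (hp : p.Prime) {k : ℕ} (lam : k.Partition) :
    MvPolynomial.map (Int.castRingHom (ZMod p))
        ((lam.parts.map fun i => hOne p (p * i)).prod) =
      MvPolynomial.map (Int.castRingHom (ZMod p))
        (((lam.parts.map fun i => (X i : LambdaZ)).prod) ^ p) := by
  have : Fact p.Prime := ⟨hp⟩
  rw [map_multiset_prod, map_pow, map_multiset_prod, Multiset.map_map, Multiset.map_map,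
    ← Multiset.prod_map_pow]
  congr 1
  refine Multiset.map_congr rfl fun i hi => ?_
  simp only [Function.comp_apply, map_hOne_mul_eq_X_pow p (lam.parts_pos hi).ne', map_X]
end
end

section
/- Let A and B be square integer matrices of the same size with coprime determinants. Then the Smith normal form of AB is the product of the Smith normal forms of A and B: S(AB) = S(A)S(B). -/
/-!
The `k`-th determinantal divisor `d_k` (gcd of the `k × k` minors) is invariant under unimodular
equivalence, and for a Smith normal form it is the product of the first `k` diagonal entries.
Every minor of `AB` is a combination of minors of `A`, and of minors of `B`, so
`d_k(A) d_k(B) ∣ d_k(AB)` once `d_k(A)` and `d_k(B)` are coprime. Conversely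
`AB · adj B = det B • A` gives `d_k(AB) ∣ (det B)^k d_k(A)`, and symmetrically
`d_k(AB) ∣ (det A)^k d_k(B)`, so coprimality of the determinants yields
`d_k(AB) = d_k(A) d_k(B)`. Quotients of consecutive `d_k` recover the diagonal entries.
-/

/-- `D` is a Smith normal form of the square integer matrix `A`: it is diagonal with positive
diagonal entries forming a divisibility chain, and is unimodularly equivalent to `A`. -/
def IsSNFOf {N : ℕ} (D A : Matrix (Fin N) (Fin N) ℤ) : Prop :=
  (∃ U V : Matrix (Fin N) (Fin N) ℤ, IsUnit U.det ∧ IsUnit V.det ∧ D = U * A * V) ∧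
    (∀ i j, i ≠ j → D i j = 0) ∧ (∀ i, 0 < D i i) ∧ (∀ i j, i ≤ j → D i i ∣ D j j)

open Matrix Finset Function

namespace Fin

theorem castLE_le_of_strictMono {k N : ℕ} (hk : k ≤ N) {e : Fin k → Fin N}
    (he : StrictMono e) (i : Fin k) : Fin.castLE hk i ≤ e i := by
  have h := Finset.card_le_card_of_injOn e (s := Iic i) (t := Iic (e i))
    (fun j hj => by simpa using he.monotone (by simpa using hj)) he.injective.injOn
  simpa [Fin.le_def] using h

theorem prod_castLE_dvd_prod_of_injective {M : Type*} [CommMonoid M] {N k : ℕ}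
    (hk : k ≤ N) {d : Fin N → M} (hd : ∀ i j, i ≤ j → d i ∣ d j) {g : Fin k → Fin N}
    (hg : Injective g) : ∏ i, d (Fin.castLE hk i) ∣ ∏ i, d (g i) := by
  have hsorted : StrictMono (g ∘ Tuple.sort g) :=
    (Tuple.monotone_sort g).strictMono_of_injective (hg.comp (Tuple.sort g).injective)
  calc ∏ i, d (Fin.castLE hk i) ∣ ∏ i, d (g (Tuple.sort g i)) :=
        Finset.prod_dvd_prod_of_dvd _ _ fun i _ =>
          hd _ _ (castLE_le_of_strictMono hk hsorted i)
    _ = ∏ i, d (g i) := Equiv.prod_comp (Tuple.sort g) fun i => d (g i)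

theorem eq_mul_of_prod_castLE_eq_mul {M : Type*} [CommMonoidWithZero M] [IsCancelMulZero M]
    {N : ℕ} {a b c : Fin N → M} (hc : ∀ i, c i ≠ 0)
    (h : ∀ k (hk : k ≤ N), ∏ i : Fin k, c (Fin.castLE hk i) =
      (∏ i : Fin k, a (Fin.castLE hk i)) * ∏ i : Fin k, b (Fin.castLE hk i)) :
    c = a * b := by
  funext m
  have : Nontrivial M := ⟨c m, 0, hc m⟩
  have hsucc (f : Fin N → M) : ∏ i : Fin (m + 1), f (Fin.castLE m.2 i) =
      (∏ i : Fin m, f (Fin.castLE m.2.le i)) * f m := by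
    rw [Fin.prod_univ_castSucc]
    rfl
  refine mul_left_cancel₀ (a := ∏ i : Fin m, c (Fin.castLE m.2.le i))
    (prod_ne_zero_iff.mpr fun i _ => hc _) ?_
  rw [← hsucc c, h (m + 1) m.2, hsucc a, hsucc b, h m m.2.le, Pi.mul_apply, mul_mul_mul_comm]

end Fin

namespace Matrix

variable {R : Type*} [CommRing R] {l m n o : Type*}

theorem det_mul_eq_sum_prod_mul_det_submatrix [Fintype m] [Fintype o] [DecidableEq o]
    (P : Matrix o m R) (Q : Matrix m o R) :
    (P * Q).det = ∑ κ : o → m, (∏ i, P i (κ i)) * (Q.submatrix κ id).det := by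
  have hrows : (P * Q : o → o → R) = fun i => ∑ j, P i j • Q j := by
    ext i k
    simp [mul_apply, Finset.sum_apply]
  calc (P * Q).det = detRowAlternating.toMultilinearMap (fun i => ∑ j, P i j • Q j) :=
        congrArg _ hrows
    _ = _ := by
      rw [MultilinearMap.map_sum]
      refine Finset.sum_congr rfl fun κ _ => ?_
      rw [MultilinearMap.map_smul_univ, smul_eq_mul]
      rfl

theorem prod_dvd_det_submatrix_diagonal [DecidableEq m] {k : ℕ} (d : m → R)
    (f g : Fin k → m) : ∏ i, d (g i) ∣ ((diagonal d).submatrix f g).det := by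
  have hcols : (diagonal d).submatrix f g =
      of fun i j => d (g j) * (1 : Matrix m m R).submatrix f g i j := by
    ext i j
    by_cases h : f i = g j <;> simp [one_apply, h]
  rw [hcols, det_mul_row]
  exact dvd_mul_right _ _

section detDivisor

variable [StrongNormalizedGCDMonoid R] [Fintype l] [Fintype m] [Fintype n]

/-- Rows and columns of a minor are selected by arbitrary maps `Fin k → _`; the extra minors this
admits are `0` or `±` an ordinary minor, so the gcd is the usual `k`-th determinantal divisor. -/
def detDivisor (k : ℕ) (X : Matrix m n R) : R :=
  univ.gcd fun p : (Fin k → m) × (Fin k → n) => (X.submatrix p.1 p.2).det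

theorem normalize_detDivisor (k : ℕ) (X : Matrix m n R) :
    normalize (X.detDivisor k) = X.detDivisor k :=
  Finset.normalize_gcd

theorem detDivisor_dvd_det_submatrix {k : ℕ} (X : Matrix m n R) (f : Fin k → m)
    (g : Fin k → n) : X.detDivisor k ∣ (X.submatrix f g).det :=
  Finset.gcd_dvd (mem_univ (f, g))

theorem dvd_detDivisor {k : ℕ} {X : Matrix m n R} {a : R}
    (h : ∀ (f : Fin k → m) (g : Fin k → n), a ∣ (X.submatrix f g).det) : a ∣ X.detDivisor k :=
  Finset.dvd_gcd fun p _ => h p.1 p.2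

theorem detDivisor_dvd_detDivisor_mul_left (k : ℕ) (Y : Matrix l m R) (X : Matrix m n R) :
    X.detDivisor k ∣ (Y * X).detDivisor k := by
  refine dvd_detDivisor fun f g => ?_
  rw [submatrix_mul Y X f id g bijective_id, det_mul_eq_sum_prod_mul_det_submatrix]
  refine Finset.dvd_sum fun κ _ => Dvd.dvd.mul_left ?_ _
  simpa using X.detDivisor_dvd_det_submatrix κ g

theorem detDivisor_transpose_dvd (k : ℕ) (X : Matrix m n R) :
    Xᵀ.detDivisor k ∣ X.detDivisor k :=
  dvd_detDivisor fun f g => by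
    rw [← det_transpose, transpose_submatrix]
    exact Xᵀ.detDivisor_dvd_det_submatrix g f

theorem detDivisor_transpose (k : ℕ) (X : Matrix m n R) : Xᵀ.detDivisor k = X.detDivisor k :=
  dvd_antisymm_of_normalize_eq (normalize_detDivisor k _) (normalize_detDivisor k _)
    (detDivisor_transpose_dvd k X) (by simpa using detDivisor_transpose_dvd k Xᵀ)

theorem detDivisor_dvd_detDivisor_mul_right (k : ℕ) (X : Matrix l m R) (Y : Matrix m n R) :
    X.detDivisor k ∣ (X * Y).detDivisor k := by
  rw [← detDivisor_transpose k X, ← detDivisor_transpose k (X * Y), transpose_mul]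
  exact detDivisor_dvd_detDivisor_mul_left k Yᵀ Xᵀ

theorem detDivisor_mul_mul_of_isUnit_det [DecidableEq m] [DecidableEq n] (k : ℕ)
    {U : Matrix m m R} {V : Matrix n n R} (hU : IsUnit U.det) (hV : IsUnit V.det)
    (X : Matrix m n R) : (U * X * V).detDivisor k = X.detDivisor k := by
  refine dvd_antisymm_of_normalize_eq (normalize_detDivisor k _) (normalize_detDivisor k _)
    ?_ ((detDivisor_dvd_detDivisor_mul_left k U X).trans
      (detDivisor_dvd_detDivisor_mul_right k _ V))
  have hX : U⁻¹ * (U * X * V) * V⁻¹ = X := by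
    rw [Matrix.mul_assoc, Matrix.mul_assoc, mul_nonsing_inv _ hV, Matrix.mul_one,
      ← Matrix.mul_assoc, nonsing_inv_mul _ hU, Matrix.one_mul]
  conv_rhs => rw [← hX]
  exact (detDivisor_dvd_detDivisor_mul_left k _ _).trans
    (detDivisor_dvd_detDivisor_mul_right k _ _)

theorem detDivisor_smul (k : ℕ) (c : R) (X : Matrix m n R) :
    (c • X).detDivisor k = normalize (c ^ k) * X.detDivisor k := by
  have hminor (f : Fin k → m) (g : Fin k → n) :
      ((c • X).submatrix f g).det = c ^ k * (X.submatrix f g).det := by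
    rw [show (c • X).submatrix f g = c • X.submatrix f g from rfl, det_smul, Fintype.card_fin]
  simp only [detDivisor, hminor]
  exact Finset.gcd_mul_left

theorem detDivisor_mul_dvd_of_isCoprime_det [DecidableEq n] (k : ℕ) {A B : Matrix n n R}
    (h : IsCoprime A.det B.det) :
    (A * B).detDivisor k ∣ A.detDivisor k * B.detDivisor k := by
  have hA : (A * B).detDivisor k ∣ B.det ^ k * A.detDivisor k := by
    have h := detDivisor_dvd_detDivisor_mul_right k (A * B) B.adjugate
    rw [Matrix.mul_assoc, mul_adjugate, Matrix.mul_smul, Matrix.mul_one, detDivisor_smul] at h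
    exact h.trans (mul_dvd_mul_right (normalize_dvd_iff.mpr dvd_rfl) _)
  have hB : (A * B).detDivisor k ∣ A.det ^ k * B.detDivisor k := by
    have h := detDivisor_dvd_detDivisor_mul_left k A.adjugate (A * B)
    rw [← Matrix.mul_assoc, adjugate_mul, Matrix.smul_mul, Matrix.one_mul, detDivisor_smul] at h
    exact h.trans (mul_dvd_mul_right (normalize_dvd_iff.mpr dvd_rfl) _)
  obtain ⟨u, v, huv⟩ := h.pow (m := k) (n := k)
  calc (A * B).detDivisor k
      ∣ A.det ^ k * B.detDivisor k * (u * A.detDivisor k)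
        + B.det ^ k * A.detDivisor k * (v * B.detDivisor k) :=
        dvd_add (hB.mul_right _) (hA.mul_right _)
    _ = A.detDivisor k * B.detDivisor k := by
        linear_combination A.detDivisor k * B.detDivisor k * huv

theorem detDivisor_mul_of_isCoprime [DecidableEq n] (k : ℕ) {A B : Matrix n n R}
    (hdet : IsCoprime A.det B.det) (hdiv : IsCoprime (A.detDivisor k) (B.detDivisor k)) :
    (A * B).detDivisor k = A.detDivisor k * B.detDivisor k :=
  dvd_antisymm_of_normalize_eq (normalize_detDivisor k _)
    (by rw [normalize_mul, normalize_detDivisor, normalize_detDivisor])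
    (detDivisor_mul_dvd_of_isCoprime_det k hdet)
    (hdiv.mul_dvd (detDivisor_dvd_detDivisor_mul_right k A B)
      (detDivisor_dvd_detDivisor_mul_left k A B))

theorem detDivisor_diagonal {N k : ℕ} (hk : k ≤ N) {d : Fin N → R}
    (hd : ∀ i j, i ≤ j → d i ∣ d j) :
    (diagonal d).detDivisor k = normalize (∏ i : Fin k, d (Fin.castLE hk i)) := by
  refine dvd_antisymm_of_normalize_eq (normalize_detDivisor k _) (normalize_idem _) ?_ ?_
  · have h := (diagonal d).detDivisor_dvd_det_submatrix (Fin.castLE hk) (Fin.castLE hk)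
    rwa [submatrix_diagonal _ _ (Fin.castLE_injective hk), det_diagonal, ← dvd_normalize_iff] at h
  · refine normalize_dvd_iff.mpr (dvd_detDivisor fun f g => ?_)
    by_cases hg : Injective g
    · exact (Fin.prod_castLE_dvd_prod_of_injective hk hd hg).trans
        (prod_dvd_det_submatrix_diagonal d f g)
    · obtain ⟨j, j', hjj', hne⟩ := Function.not_injective_iff.mp hg
      rw [det_zero_of_column_eq hne fun i => by simp [hjj']]
      exact dvd_zero _

end detDivisor

end Matrix

namespace IsSNFOf

variable {N : ℕ} {D A : Matrix (Fin N) (Fin N) ℤ}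

theorem isDiag (h : IsSNFOf D A) : D.IsDiag :=
  fun _ _ hij => h.2.1 _ _ hij

theorem diag_pos (h : IsSNFOf D A) (i : Fin N) : 0 < D i i :=
  h.2.2.1 i

theorem detDivisor_eq (h : IsSNFOf D A) {k : ℕ} (hk : k ≤ N) :
    A.detDivisor k = ∏ i : Fin k, D (Fin.castLE hk i) (Fin.castLE hk i) := by
  obtain ⟨⟨U, V, hU, hV, hD⟩, hdiag, hpos, hchain⟩ := h
  calc A.detDivisor k = (diagonal D.diag).detDivisor k := by
        rw [IsDiag.diagonal_diag hdiag, hD, detDivisor_mul_mul_of_isUnit_det k hU hV]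
    _ = _ := by
        rw [detDivisor_diagonal (d := D.diag) hk hchain]
        exact Int.normalize_of_nonneg (prod_nonneg fun i _ => (hpos _).le)

theorem detDivisor_dvd_det (h : IsSNFOf D A) {k : ℕ} (hk : k ≤ N) : A.detDivisor k ∣ A.det := by
  rw [h.detDivisor_eq hk]
  obtain ⟨⟨U, V, hU, hV, hD⟩, hdiag, -, -⟩ := h
  have hdet : ∏ i, D.diag i = U.det * A.det * V.det := by
    rw [← det_diagonal, IsDiag.diagonal_diag hdiag, hD, det_mul, det_mul]
  rw [← hU.dvd_mul_left, ← hV.dvd_mul_right, ← hdet]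
  calc ∏ i : Fin k, D (Fin.castLE hk i) (Fin.castLE hk i)
      = ∏ i ∈ univ.map (Fin.castLEEmb hk), D.diag i :=
        (prod_map univ (Fin.castLEEmb hk) D.diag).symm
    _ ∣ ∏ i, D.diag i := prod_dvd_prod_of_subset _ _ _ (subset_univ _)

end IsSNFOf

/-- Let `A` and `B` be square integer matrices of the same size with coprime
determinants.  Then the Smith normal form of `AB` is the product of the Smith normal forms of
`A` and `B`: `S(AB) = S(A) S(B)`. -/
theorem snf_mul_of_coprime_det {N : ℕ} (A B : Matrix (Fin N) (Fin N) ℤ)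
    (hcop : IsCoprime A.det B.det)
    (DA DB DAB : Matrix (Fin N) (Fin N) ℤ)
    (hA : IsSNFOf DA A) (hB : IsSNFOf DB B) (hAB : IsSNFOf DAB (A * B)) :
    DAB = DA * DB := by
  have hprefix : ∀ k (hk : k ≤ N), ∏ i : Fin k, DAB (Fin.castLE hk i) (Fin.castLE hk i) =
      (∏ i : Fin k, DA (Fin.castLE hk i) (Fin.castLE hk i)) *
        ∏ i : Fin k, DB (Fin.castLE hk i) (Fin.castLE hk i) := by
    intro k hk
    have hdiv : IsCoprime (A.detDivisor k) (B.detDivisor k) :=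
      (hcop.of_isCoprime_of_dvd_left (hA.detDivisor_dvd_det hk)).of_isCoprime_of_dvd_right
        (hB.detDivisor_dvd_det hk)
    rw [← hA.detDivisor_eq hk, ← hB.detDivisor_eq hk, ← hAB.detDivisor_eq hk,
      detDivisor_mul_of_isCoprime k hcop hdiv]
  rw [← hAB.isDiag.diagonal_diag, ← hA.isDiag.diagonal_diag, ← hB.isDiag.diagonal_diag,
    diagonal_mul_diagonal]
  exact congrArg diagonal
    (Fin.eq_mul_of_prod_castLE_eq_mul (fun i => (hAB.diag_pos i).ne') hprefix)
end

section
/- Let X = (a_{ij}) be an l×l integer matrix, and let Q̃, T̃ be unimodular integer matrices with Q̃XT̃ = diag(a_1,…,a_l). Form the block matrices P(Y) = ⊕_{λ} S^{m_1(λ)}(Y) ⊗ S^{m_2(λ)}(Y) ⊗ ⋯ over partitions λ = (1^{m_1}2^{m_2}⋯) of a fixed size, where S^m denotes the m-th symmetric power of a matrix. Then P(Q̃) P(X) P(T̃) = P(diag(a_1,…,a_l)), and in particular P(Q̃) and P(T̃) are unimodular, so the invariant factors of P(X) are the products a_1^{ℓ(λ^{(1)})} ⋯ a_l^{ℓ(λ^{(l)})}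 over l-multipartitions (λ^{(1)},…,λ^{(l)}) of total size d. -/
/-!
`S^m(Y)` is the matrix, in the basis of degree-`m` monomials, of the linear substitution
`x_i ↦ ∑_j Y_{ji} x_j`. Composing substitutions multiplies the matrices and substitutions
preserve homogeneity, so `S^m` is multiplicative; `P(Y)` is block diagonal over partitions with
Kronecker products of symmetric powers as blocks, hence multiplicative too. A diagonal matrix
rescales each monomial, which makes `P(diag a)` diagonal, and `P(Y) P(Y⁻¹) = P(1) = 1` gives
unimodularity.
-/

open MvPolynomial

noncomputable section

/-- The entry of the `m`-th symmetric power `S^m(Y)` of an `l × l` matrix `Y`, in the basis of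
monomials indexed by weakly increasing `m`-tuples (i.e. multisets of size `m`): the `(a, b)`
entry is the coefficient of `x^a` in `∏_i (∑_j Y_{ji} x_j)^{b_i}`. -/
def symPowEntry {l m : ℕ} (Y : Matrix (Fin l) (Fin l) ℤ) (a b : Sym (Fin l) m) : ℤ :=
  MvPolynomial.coeff
    (Finsupp.equivFunOnFinite.symm fun i => Multiset.count i (a : Multiset (Fin l)))
    (∏ i : Fin l,
      (∑ j : Fin l, MvPolynomial.C (Y j i) * MvPolynomial.X j) ^
        Multiset.count i (b : Multiset (Fin l)))

/-- The index set of the block matrix `P(Y) = ⊕_{λ ⊢ d} S^{m_1(λ)}(Y) ⊗ S^{m_2(λ)}(Y) ⊗ ⋯`: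
a partition `λ` of `d` together with, for each part size `r`, a multiset of `m_r(λ)` colors
from `{1, …, l}`.  These data are in bijection with `l`-multipartitions of `d`. -/
abbrev PartIdx (d l : ℕ) : Type :=
  (lam : d.Partition) × ((r : Fin (d + 1)) → Sym (Fin l) (lam.parts.count (r : ℕ)))

/-- The block matrix `P(Y) = ⊕_{λ ⊢ d} S^{m_1(λ)}(Y) ⊗ S^{m_2(λ)}(Y) ⊗ ⋯`. -/
def blockP {d l : ℕ} (Y : Matrix (Fin l) (Fin l) ℤ) :
    Matrix (PartIdx d l) (PartIdx d l) ℤ := fun q q' =>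
  if h : q.1 = q'.1 then
    ∏ r : Fin (d + 1), symPowEntry Y (q.2 r) (cast (by rw [h]) (q'.2 r))
  else 0

theorem Sym.degree_toFinsupp {α : Type*} [DecidableEq α] {m : ℕ} (c : Sym α m) :
    (Multiset.toFinsupp (c : Multiset α)).degree = m :=
  (Multiset.toFinsupp_sum_eq _).trans c.2

namespace MvPolynomial

variable {R σ : Type*} [CommSemiring R] [Fintype σ]

def linSubst (Y : Matrix σ σ R) : MvPolynomial σ R →ₐ[R] MvPolynomial σ R :=
  aeval fun i => ∑ j, C (Y j i) * X j

theorem linSubst_X (Y : Matrix σ σ R) (i : σ) :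
    linSubst Y (X i) = ∑ j, C (Y j i) * X j :=
  aeval_X _ i

theorem linSubst_comp_linSubst (Y Z : Matrix σ σ R) :
    (linSubst Y).comp (linSubst Z) = linSubst (Y * Z) := by
  refine algHom_ext fun i => ?_
  simp only [AlgHom.comp_apply, linSubst_X, map_sum, map_mul, algHom_C, algebraMap_eq,
    Matrix.mul_apply, Finset.mul_sum, Finset.sum_mul]
  rw [Finset.sum_comm]
  exact Finset.sum_congr rfl fun _ _ => Finset.sum_congr rfl fun _ _ => by ring

theorem IsHomogeneous.linSubst {p : MvPolynomial σ R} {m : ℕ} (hp : p.IsHomogeneous m)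
    (Y : Matrix σ σ R) : (linSubst Y p).IsHomogeneous m := by
  have h := hp.aeval (fun i => ∑ j, C (Y j i) * X j) fun i =>
    IsHomogeneous.sum _ _ 1 fun j _ => isHomogeneous_C_mul_X (Y j i) j
  rwa [one_mul] at h

theorem linSubst_diagonal_monomial [DecidableEq σ] (v : σ → R) (u : σ →₀ ℕ) :
    linSubst (Matrix.diagonal v) (monomial u 1) = monomial u (∏ i, v i ^ u i) := by
  have hX : ∀ i, linSubst (Matrix.diagonal v) (X i) = C (v i) * X i := fun i => by
    simp [linSubst_X, Matrix.diagonal_apply, apply_ite C, ite_mul]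
  rw [← prod_X_pow_eq_monomial, map_prod]
  simp_rw [map_pow, hX, mul_pow, Finset.prod_mul_distrib, ← map_pow, ← map_prod,
    prod_X_pow_eq_monomial, C_mul_monomial, mul_one]
  congr 1
  exact Finset.prod_subset (Finset.subset_univ _) fun i _ hi => by
    rw [Finsupp.notMem_support_iff.mp hi, pow_zero]

theorem IsHomogeneous.sum_sym_monomial [DecidableEq σ] {p : MvPolynomial σ R} {m : ℕ}
    (hp : p.IsHomogeneous m) :
    ∑ c : Sym σ m, monomial (Multiset.toFinsupp (c : Multiset σ))
      (coeff (Multiset.toFinsupp (c : Multiset σ)) p) = p := by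
  have hsupp :
      p.support ⊆ Finset.univ.image fun c : Sym σ m => Multiset.toFinsupp (c : Multiset σ) := by
    intro u hu
    have hcard : Multiset.card (Finsupp.toMultiset u) = m := by
      rw [Finsupp.card_toMultiset, ← hp (mem_support_iff.mp hu), Finsupp.weight_apply]
      simp [Finsupp.sum]
    exact Finset.mem_image.mpr ⟨⟨_, hcard⟩, Finset.mem_univ _, Finsupp.toMultiset_toFinsupp u⟩
  conv_rhs => rw [p.as_sum, Finset.sum_subset hsupp fun u _ hu => by
    rw [notMem_support_iff.mp hu, monomial_zero]]
  rw [Finset.sum_image fun c _ c' _ h => Sym.coe_injective (Multiset.toFinsupp.injective h)]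

end MvPolynomial

namespace Matrix

variable {ι R : Type*} [Fintype ι] [CommSemiring R] {m n p : ι → Type*}

def piKronecker (A : ∀ i, Matrix (m i) (n i) R) : Matrix (∀ i, m i) (∀ i, n i) R :=
  of fun f g => ∏ i, A i (f i) (g i)

theorem piKronecker_mul [DecidableEq ι] [∀ i, Fintype (n i)] (A : ∀ i, Matrix (m i) (n i) R)
    (B : ∀ i, Matrix (n i) (p i) R) :
    piKronecker (fun i => A i * B i) = piKronecker A * piKronecker B := by
  ext f g
  simp only [piKronecker, of_apply, mul_apply, Finset.prod_univ_sum, Fintype.piFinset_univ,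
    Finset.prod_mul_distrib]

theorem piKronecker_diagonal [∀ i, DecidableEq (m i)] (d : ∀ i, m i → R) :
    piKronecker (fun i => diagonal (d i)) = diagonal fun f => ∏ i, d i (f i) := by
  ext f g
  by_cases hfg : f = g
  · subst hfg
    simp [piKronecker]
  · obtain ⟨i, hi⟩ := Function.ne_iff.mp hfg
    rw [diagonal_apply_ne _ hfg]
    exact Finset.prod_eq_zero (Finset.mem_univ i) (diagonal_apply_ne _ hi)

end Matrix

section BlockP

variable {d l : ℕ}

def symPow (Y : Matrix (Fin l) (Fin l) ℤ) (m : ℕ) :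
    Matrix (Sym (Fin l) m) (Sym (Fin l) m) ℤ :=
  Matrix.of (symPowEntry Y)

theorem symPowEntry_eq_coeff_linSubst {m : ℕ} (Y : Matrix (Fin l) (Fin l) ℤ)
    (a b : Sym (Fin l) m) :
    symPowEntry Y a b = coeff (Multiset.toFinsupp (a : Multiset (Fin l)))
      (linSubst Y (monomial (Multiset.toFinsupp (b : Multiset (Fin l))) 1)) := by
  rw [linSubst, aeval_monomial, map_one, one_mul, Finsupp.prod_fintype _ _ fun _ => pow_zero _,
    symPowEntry]
  congr 1
  ext i
  simp

theorem symPow_mul (Y Z : Matrix (Fin l) (Fin l) ℤ) (m : ℕ) :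
    symPow (Y * Z) m = symPow Y m * symPow Z m := by
  ext a b
  have hZb := (isHomogeneous_monomial (1 : ℤ) (Sym.degree_toFinsupp b)).linSubst Z
  simp only [symPow, Matrix.of_apply, Matrix.mul_apply, symPowEntry_eq_coeff_linSubst,
    ← linSubst_comp_linSubst, AlgHom.comp_apply]
  conv_lhs => rw [← hZb.sum_sym_monomial]
  simp only [map_sum, coeff_sum]
  refine Finset.sum_congr rfl fun c _ => ?_
  have hscale (u : Fin l →₀ ℕ) (r : ℤ) : monomial u r = C r * monomial u 1 := by
    rw [C_mul_monomial, mul_one]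
  rw [hscale _ (coeff _ (linSubst Z _)), map_mul, algHom_C, algebraMap_eq, coeff_C_mul, mul_comm]

theorem symPow_diagonal (v : Fin l → ℤ) (m : ℕ) :
    symPow (Matrix.diagonal v) m =
      Matrix.diagonal fun c : Sym (Fin l) m =>
        ∏ k, v k ^ Multiset.count k (c : Multiset (Fin l)) := by
  ext a b
  rw [symPow, Matrix.of_apply, symPowEntry_eq_coeff_linSubst, linSubst_diagonal_monomial,
    coeff_monomial, Matrix.diagonal_apply]
  by_cases hab : a = b
  · subst hab
    simp
  · rw [if_neg hab, if_neg fun h => hab (Sym.coe_injective (Multiset.toFinsupp.injective h)).symm]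

theorem blockP_eq_blockDiagonal' (Y : Matrix (Fin l) (Fin l) ℤ) :
    blockP (d := d) Y =
      Matrix.blockDiagonal' fun lam : d.Partition => Matrix.piKronecker fun r : Fin (d + 1) =>
        symPow Y (lam.parts.count (r : ℕ)) := by
  ext ⟨lam, f⟩ ⟨lam', f'⟩
  by_cases h : lam = lam'
  · subst h
    simp [blockP, Matrix.piKronecker, symPow]
  · simp [blockP, Matrix.blockDiagonal'_apply_ne _ _ _ h, h]

theorem blockP_mul (Y Z : Matrix (Fin l) (Fin l) ℤ) :
    blockP (d := d) (Y * Z) = blockP Y * blockP Z := by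
  simp only [blockP_eq_blockDiagonal', symPow_mul, Matrix.piKronecker_mul,
    Matrix.blockDiagonal'_mul]

theorem blockP_diagonal (v : Fin l → ℤ) :
    blockP (d := d) (Matrix.diagonal v) =
      Matrix.diagonal fun q : PartIdx d l =>
        ∏ k, v k ^ ∑ r, Multiset.count k (q.2 r : Multiset (Fin l)) := by
  simp only [blockP_eq_blockDiagonal', symPow_diagonal, Matrix.piKronecker_diagonal,
    Matrix.blockDiagonal'_diagonal]
  congr 1
  ext q
  rw [Finset.prod_comm]
  exact Finset.prod_congr rfl fun k _ => Finset.prod_pow_eq_pow_sum _ _ _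

theorem blockP_one : blockP (d := d) (1 : Matrix (Fin l) (Fin l) ℤ) = 1 := by
  rw [← Matrix.diagonal_one, blockP_diagonal]
  simp

theorem isUnit_det_blockP {Y : Matrix (Fin l) (Fin l) ℤ} (hY : IsUnit Y.det) :
    IsUnit (blockP (d := d) Y).det :=
  Matrix.isUnit_det_of_right_inverse (B := blockP Y⁻¹) <| by
    rw [← blockP_mul, Matrix.mul_nonsing_inv Y hY, blockP_one]

end BlockP

/-- Let `X = (a_{ij})` be an `l × l` integer matrix and `Q̃, T̃` unimodular
integer matrices with `Q̃ X T̃ = diag(a_1, …, a_l)`.  Then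
`P(Q̃) P(X) P(T̃) = P(diag(a_1, …, a_l))`, where `P(diag(a))` is the diagonal matrix whose
entry at the multipartition `(λ^{(1)}, …, λ^{(l)})` is `a_1^{ℓ(λ^{(1)})} ⋯ a_l^{ℓ(λ^{(l)})}`;
in particular `P(Q̃)` and `P(T̃)` are unimodular, so these products are the invariant factors
of `P(X)`. -/
theorem blockP_conj (l d : ℕ) (Xm Qt Tt : Matrix (Fin l) (Fin l) ℤ) (a : Fin l → ℤ)
    (hQ : IsUnit Qt.det) (hT : IsUnit Tt.det)
    (hdiag : Qt * Xm * Tt = Matrix.diagonal a) :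
    blockP (d := d) Qt * blockP Xm * blockP Tt = blockP (Matrix.diagonal a) ∧
      blockP (d := d) (Matrix.diagonal a) =
        Matrix.diagonal (fun q : PartIdx d l =>
          ∏ k : Fin l, a k ^ (∑ r : Fin (d + 1), Multiset.count k ((q.2 r : Multiset (Fin l))))) ∧
      IsUnit (blockP (d := d) Qt).det ∧ IsUnit (blockP (d := d) Tt).det :=
  ⟨by rw [← blockP_mul, ← blockP_mul, hdiag], blockP_diagonal a, isUnit_det_blockP hQ,
    isUnit_det_blockP hT⟩
end
end

section
/- For p prime and the basis elements G defined by G_{(n)} = g_n, G_{(n^{p^i})} = g_{p^i n}, and G_{(p^i n)} = p G_{(n^{p^i})} + (G_{(n^{p^{i-1}})})^p (n prime to p, i ≥ 1), the coefficient of G_{(n^{m})} in the expansion of (G_{(n)})^{m} in the basis (G_λ) equals ± p^{d_p(m)}, where for m = Σ a_j p^j one sets G_{(n^m)} = ∏_j (G_{(n^{p^j})})^{a_j} and d_p(m) = Σ_{k≥1}⌊m/p^k⌋. -/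
open MvPolynomial

noncomputable section

/-- `d_p(m) = ∑_{k ≥ 1} ⌊m / p^k⌋` (for `p ≥ 2` the terms with `k > m` vanish). -/
def dp (p m : ℕ) : ℕ := ∑ k ∈ Finset.Icc 1 m, m / p ^ k

/-- The `j`-th `p`-adic digit of `m`. -/
def pDigit (p m j : ℕ) : ℕ := (Nat.digits p m).getD j 0

/-- For a fixed `n` prime to `p`, the subring of `Λ` generated by the elements
`G_{(n^{p^i})} = g_{p^i n}` (for `i ≥ 0`) is a polynomial ring; we model it as
`MvPolynomial ℕ ℤ` with the variable `i` standing for `G_{(n^{p^i})}`.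
`GPow p c = G_{(n^c)} := ∏_j (G_{(n^{p^j})})^{a_j}` where `c = ∑_j a_j p^j` is the
`p`-adic expansion of `c`. -/
def GPow (p c : ℕ) : MvPolynomial ℕ ℤ :=
  ∏ j ∈ Finset.range (c + 1), X j ^ pDigit p c j

/-- `G_{(p^i n)} := p G_{(n^{p^i})} + (G_{(n^{p^{i-1}})})^p` for `i ≥ 1`
(and `G_{(n)} = G_{(n^{p^0})}` for `i = 0`). -/
def GPart (p i : ℕ) : MvPolynomial ℕ ℤ :=
  if i = 0 then X 0 else C (p : ℤ) * X i + X (i - 1) ^ p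

/-- The basis element `G_λ` for the partition `λ` of parts `p^i n` with multiplicities
`c i`: `G_λ = G_{(n^{c 0})} ∏_{i ≥ 1} (G_{(p^i n)})^{c i}`, following the rules
`G_{(n^m)} = ∏_j (G_{(n^{p^j})})^{a_j}` (with `m = ∑ a_j p^j` the `p`-adic expansion) and
`G_{((p^i n)^m)} = (G_{(p^i n)})^m` for `i ≥ 1`. -/
def GBasis (p : ℕ) (c : ℕ →₀ ℕ) : MvPolynomial ℕ ℤ :=
  GPow p (c 0) * ∏ i ∈ c.support.erase 0, GPart p i ^ c i

def eExp (p : ℕ) : ℕ → ℕ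
  | 0 => 0
  | i + 1 => p * eExp p i + 1

lemma eExp_spec (p : ℕ) (hp : 1 ≤ p) (j : ℕ) : (p - 1) * eExp p j + 1 = p ^ j := by
  induction j with
  | zero => simp [eExp]
  | succ j ih =>
    rw [eExp, pow_succ, ← ih]
    have h1 : p - 1 + 1 = p := Nat.succ_pred_eq_of_pos hp
    nlinarith [h1]

lemma sum_getD_mul_pow (b : ℕ) : ∀ (L : List ℕ) (N : ℕ), L.length ≤ N →
    ∑ j ∈ Finset.range N, L.getD j 0 * b ^ j = Nat.ofDigits b L := by
  intro L
  induction L with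
  | nil => intro N _; simp [Nat.ofDigits_nil, List.getD_nil]
  | cons a L ih =>
    intro N hN
    cases N with
    | zero => simp at hN
    | succ N =>
      rw [Finset.sum_range_succ']
      simp only [List.getD_cons_succ, List.getD_cons_zero, pow_zero, mul_one,
        Nat.ofDigits_cons]
      have : ∀ j, L.getD j 0 * b ^ (j + 1) = (L.getD j 0 * b ^ j) * b := by
        intro j; rw [pow_succ]; ring
      rw [Finset.sum_congr rfl fun j _ => this j, ← Finset.sum_mul,
        ih N (by simpa using hN)]
      ring

lemma digits_len_le (p m : ℕ) (hp : 2 ≤ p) : (Nat.digits p m).length ≤ m + 1 := by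
  rcases Nat.eq_zero_or_pos m with rfl | hm
  · simp
  · rw [Nat.digits_len p m hp (by omega)]
    have := Nat.log_le_self p m  -- check name
    omega

lemma sum_digit_pow (p m : ℕ) (hp : 2 ≤ p) :
    ∑ j ∈ Finset.range (m + 1), pDigit p m j * p ^ j = m := by
  have := sum_getD_mul_pow p (Nat.digits p m) (m + 1) (digits_len_le p m hp)
  simpa [pDigit, Nat.ofDigits_digits] using this

lemma sum_digit (p m : ℕ) (hp : 2 ≤ p) :
    ∑ j ∈ Finset.range (m + 1), pDigit p m j = (Nat.digits p m).sum := by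
  have := sum_getD_mul_pow 1 (Nat.digits p m) (m + 1) (digits_len_le p m hp)
  simpa [pDigit, Nat.ofDigits_one] using this

lemma dp_eq_E (p m : ℕ) (hp : p.Prime) :
    dp p m = ∑ j ∈ Finset.range (m + 1), pDigit p m j * eExp p j := by
  haveI : Fact p.Prime := ⟨hp⟩
  have hp2 : 2 ≤ p := hp.two_le
  set E := ∑ j ∈ Finset.range (m + 1), pDigit p m j * eExp p j with hE
  have key : m = (p - 1) * E + (Nat.digits p m).sum := by
    conv_lhs => rw [← sum_digit_pow p m hp2]
    rw [hE, Finset.mul_sum, ← sum_digit p m hp2, ← Finset.sum_add_distrib]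
    refine Finset.sum_congr rfl fun j _ => ?_
    rw [← eExp_spec p (by omega) j]; ring
  have hdp : dp p m = padicValNat p m.factorial := by
    rw [padicValNat_factorial (b := m + 1) (by have := Nat.log_le_self p m; omega)]
    rw [dp, Finset.Ico_add_one_right_eq_Icc]
  have leg := sub_one_mul_padicValNat_factorial (p := p) m
  rw [show padicValNat p m.factorial = dp p m from hdp.symm] at leg
  have : (p - 1) * dp p m = (p - 1) * E := by omega
  have hp1 : 0 < p - 1 := by omega
  exact Nat.eq_of_mul_eq_mul_left hp1 this

/-- In the expansion of `(G_{(n)})^m` in the basis `(G_λ)` (indexed here by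
the multiplicity functions `c` of the parts `p^i n`), the coefficient of `G_{(n^m)}` — the
basis element indexed by the partition `(n^m)`, i.e. `c = single 0 m` — equals
`± p^{d_p(m)}`. -/
theorem GPow_coeff_self (p : ℕ) (hp : p.Prime) (m : ℕ)
    (coeffs : (ℕ →₀ ℕ) →₀ ℤ)
    (hexp : (X 0 : MvPolynomial ℕ ℤ) ^ m = coeffs.sum fun c z => z • GBasis p c) :
    coeffs (Finsupp.single 0 m) = (p : ℤ) ^ dp p m ∨
      coeffs (Finsupp.single 0 m) = -((p : ℤ) ^ dp p m) := by
  have hp2 : 2 ≤ p := hp.two_le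
  have hp0 : (p : ℚ) ≠ 0 := by exact_mod_cast hp.ne_zero
  set r : ℚ := -(p : ℚ)⁻¹ with hr
  set φ : MvPolynomial ℕ ℤ →ₐ[ℤ] Polynomial ℚ :=
    aeval fun i => Polynomial.C (r ^ eExp p i) * Polynomial.X ^ (p ^ i) with hφ
  have hpr : (p : ℚ) * r = -1 := by
    rw [hr]; field_simp
  -- φ of GPart
  have hGPartX : ∀ i, φ (X i) = Polynomial.C (r ^ eExp p i) * Polynomial.X ^ (p ^ i) := by
    intro i; rw [hφ, aeval_X]
  have hGPart0 : ∀ i, i ≠ 0 → φ (GPart p i) = 0 := by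
    intro i hi
    obtain ⟨i, rfl⟩ := Nat.exists_eq_succ_of_ne_zero hi
    rw [GPart, if_neg (Nat.succ_ne_zero i)]
    have hC : φ (C (p : ℤ)) = Polynomial.C ((p : ℚ)) := by simp [hφ]
    rw [map_add, map_mul, map_pow, hGPartX, hGPartX, hC]
    simp only [Nat.succ_eq_add_one, Nat.add_sub_cancel]
    simp only [mul_pow, ← Polynomial.C_pow, ← pow_mul]
    have hexp2 : p ^ i * p = p ^ (i + 1) := (pow_succ p i).symm
    rw [hexp2, show eExp p (i + 1) = p * eExp p i + 1 from rfl]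
    have hz : (p:ℚ) * r ^ (p * eExp p i + 1) + r ^ (eExp p i * p) = 0 := by
      rw [pow_succ, Nat.mul_comm (eExp p i) p,
        show (p:ℚ) * (r ^ (p * eExp p i) * r) = r ^ (p * eExp p i) * ((p:ℚ) * r) by ring, hpr]
      ring
    have : Polynomial.C ((p:ℚ)) * (Polynomial.C (r ^ (p * eExp p i + 1)) * Polynomial.X ^ p ^ (i+1))
        + Polynomial.C (r ^ (eExp p i * p)) * Polynomial.X ^ p ^ (i+1)
        = Polynomial.C ((p:ℚ) * r ^ (p * eExp p i + 1) + r ^ (eExp p i * p))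
            * Polynomial.X ^ p ^ (i+1) := by
      rw [map_add, Polynomial.C_mul, add_mul, mul_assoc]
    rw [this, hz]; simp
  -- φ of GPow
  have hGPow : ∀ k, φ (GPow p k) =
      Polynomial.C (r ^ (∑ j ∈ Finset.range (k+1), pDigit p k j * eExp p j)) * Polynomial.X ^ k := by
    intro k
    rw [GPow, map_prod]
    have : ∀ j ∈ Finset.range (k+1), φ (X j ^ pDigit p k j)
        = Polynomial.C (r ^ (pDigit p k j * eExp p j)) * Polynomial.X ^ (pDigit p k j * p ^ j) := by
      intro j _
      rw [map_pow, hGPartX, mul_pow, ← Polynomial.C_pow, ← pow_mul, ← pow_mul,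
        mul_comm (eExp p j) (pDigit p k j), mul_comm (p ^ j) (pDigit p k j)]
    rw [Finset.prod_congr rfl this, Finset.prod_mul_distrib, ← map_prod,
      Finset.prod_pow_eq_pow_sum, Finset.prod_pow_eq_pow_sum, sum_digit_pow p k hp2]
  -- coefficients of basis images
  have hGB0 : ∀ c : ℕ →₀ ℕ, c ≠ Finsupp.single 0 m →
      Polynomial.coeff (φ (GBasis p c)) m = 0 := by
    intro c hc
    rw [GBasis, map_mul, map_prod]
    by_cases h : (c.support.erase 0).Nonempty
    · obtain ⟨i, hi⟩ := h
      have hi0 : i ≠ 0 := Finset.ne_of_mem_erase hi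
      have hci : c i ≠ 0 := Finsupp.mem_support_iff.mp (Finset.mem_of_mem_erase hi)
      have hz : ∏ i ∈ c.support.erase 0, φ (GPart p i ^ c i) = 0 := by
        apply Finset.prod_eq_zero hi
        rw [map_pow, hGPart0 i hi0, zero_pow hci]
      rw [hz, mul_zero, Polynomial.coeff_zero]
    · have hsupp : c.support ⊆ {0} := by
        intro x hx
        by_contra hx0
        exact h ⟨x, Finset.mem_erase.mpr ⟨by simpa using hx0, hx⟩⟩
      have hcs : c = Finsupp.single 0 (c 0) := Finsupp.support_subset_singleton.mp hsupp
      have hc0 : c 0 ≠ m := fun hm => hc (by rw [hcs, hm])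
      have he : c.support.erase 0 = ∅ := Finset.not_nonempty_iff_eq_empty.mp h
      rw [he, Finset.prod_empty, mul_one, hGPow,
        Polynomial.coeff_C_mul, Polynomial.coeff_X_pow, if_neg (fun hh => hc0 hh.symm), mul_zero]
  set E := ∑ j ∈ Finset.range (m + 1), pDigit p m j * eExp p j with hEdef
  have hGBm : Polynomial.coeff (φ (GBasis p (Finsupp.single 0 m))) m = r ^ E := by
    rw [GBasis, map_mul, map_prod]
    have hs : (Finsupp.single 0 m : ℕ →₀ ℕ).support.erase 0 = ∅ := by
      rcases eq_or_ne m 0 with rfl | hm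
      · simp
      · rw [Finsupp.support_single_ne_zero _ hm]; simp
    rw [hs, Finset.prod_empty, mul_one, Finsupp.single_eq_same, hGPow,
      Polynomial.coeff_C_mul, Polynomial.coeff_X_pow, if_pos rfl, mul_one]
  -- apply φ and take the coefficient of X^m
  have happ := congrArg (fun q : MvPolynomial ℕ ℤ => Polynomial.coeff (φ q) m) hexp
  rw [map_pow, hGPartX 0] at happ
  have hX0 : Polynomial.C (r ^ eExp p 0) * Polynomial.X ^ p ^ 0 = (Polynomial.X : Polynomial ℚ) := by
    simp [eExp]
  rw [hX0, Polynomial.coeff_X_pow, if_pos rfl] at happ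
  have hsum : Polynomial.coeff (φ (coeffs.sum fun c z => z • GBasis p c)) m
      = ∑ c ∈ coeffs.support, (coeffs c : ℚ) * Polynomial.coeff (φ (GBasis p c)) m := by
    rw [Finsupp.sum, map_sum, Polynomial.finset_sum_coeff]
    refine Finset.sum_congr rfl fun c _ => ?_
    rw [map_zsmul, Polynomial.coeff_smul, zsmul_eq_mul]
  rw [hsum] at happ
  have hsingle : ∑ c ∈ coeffs.support, (coeffs c : ℚ) * Polynomial.coeff (φ (GBasis p c)) m
      = (coeffs (Finsupp.single 0 m) : ℚ) * r ^ E := by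
    rw [Finset.sum_eq_single (Finsupp.single 0 m)]
    · rw [hGBm]
    · intro c _ hne; rw [hGB0 c hne, mul_zero]
    · intro h; rw [Finsupp.notMem_support_iff.mp h]; simp
  rw [hsingle] at happ
  -- happ : 1 = z * r ^ E
  have hone : r * -(p : ℚ) = 1 := by rw [hr]; field_simp
  have hzq : (coeffs (Finsupp.single 0 m) : ℚ) = (-(p : ℚ)) ^ E := by
    calc (coeffs (Finsupp.single 0 m) : ℚ)
        = (coeffs (Finsupp.single 0 m) : ℚ) * (r ^ E * (-(p : ℚ)) ^ E) := by
          rw [← mul_pow, hone, one_pow, mul_one]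
      _ = ((coeffs (Finsupp.single 0 m) : ℚ) * r ^ E) * (-(p : ℚ)) ^ E := by ring
      _ = (-(p : ℚ)) ^ E := by rw [← happ, one_mul]
  have hzint : coeffs (Finsupp.single 0 m) = (-(p : ℤ)) ^ E := by
    have : ((((-(p : ℤ)) ^ E : ℤ)) : ℚ) = (-(p : ℚ)) ^ E := by push_cast; ring
    exact_mod_cast hzq.trans this.symm
  have hEdp : dp p m = E := dp_eq_E p m hp
  rw [hzint, hEdp]
  rcases Nat.even_or_odd E with hev | hod
  · left; rw [hev.neg_pow]
  · right; rw [hod.neg_pow]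
end
end
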